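/- For u, v in the open unit ball of ℝⁿ, the Lorentz boost applied to the four-velocity of v gives the four-velocity of u ⊕ v: B(u) · (γ_v, γ_v v)ᵀ = (γ_{u⊕v}, γ_{u⊕v} (u⊕v))ᵀ. -/

import Mathlib

open scoped RealInnerProductSpace

noncomputable def gam {n : ℕ} (v : EuclideanSpace ℝ (Fin n)) : ℝ :=
  1 / Real.sqrt (1 - ‖v‖ ^ 2)

noncomputable def eAdd {n : ℕ} (u v : EuclideanSpace ℝ (Fin n)) :
    EuclideanSpace ℝ (Fin n) :=
  (1 / (1 + ⟪u, v⟫)) •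
    (u + (1 / gam u) • v + ((gam u / (1 + gam u)) * ⟪u, v⟫) • u)

noncomputable def boost {n : ℕ} (v : EuclideanSpace ℝ (Fin n)) :
    Matrix (Unit ⊕ Fin n) (Unit ⊕ Fin n) ℝ :=
  Matrix.fromBlocks
    (Matrix.of fun _ _ => gam v)
    (Matrix.of fun _ j => gam v * v j)
    (Matrix.of fun i _ => gam v * v i)
    (1 + Matrix.of fun i j => (gam v) ^ 2 / (1 + gam v) * v i * v j)

/-!
The boost sends `(t, x)` to `(γ_u (t + ⟪u, x⟫), x + γ_u (t + γ_u / (1 + γ_u) ⟪u, x⟫) u)`.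
For the four-velocity `γ_v (1, v)` the time component is `γ_u γ_v (1 + ⟪u, v⟫)`, and the gamma
identity `1 - ‖u ⊕ v‖² = (γ_u γ_v (1 + ⟪u, v⟫))⁻²` says this is `γ_{u ⊕ v}`. Multiplying the
formula for `u ⊕ v` by this factor cancels the denominator `1 + ⟪u, v⟫` and gives the space
component.
-/

section

variable {n : ℕ} {u v : EuclideanSpace ℝ (Fin n)}

lemma gam_pos (hv : ‖v‖ < 1) : 0 < gam v := by
  have : 0 < 1 - ‖v‖ ^ 2 := by nlinarith [norm_nonneg v]
  unfold gam
  positivity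

lemma norm_sq_eq_one_sub_inv_gam_sq (hv : ‖v‖ < 1) : ‖v‖ ^ 2 = 1 - (gam v ^ 2)⁻¹ := by
  have : 0 ≤ 1 - ‖v‖ ^ 2 := by nlinarith [norm_nonneg v]
  rw [gam, div_pow, one_pow, Real.sq_sqrt this, one_div, inv_inv, sub_sub_cancel]

lemma one_add_inner_pos (hu : ‖u‖ < 1) (hv : ‖v‖ < 1) : 0 < 1 + ⟪u, v⟫ := by
  have : |⟪u, v⟫| < 1 := (abs_real_inner_le_norm u v).trans_lt
    (by nlinarith [norm_nonneg u, norm_nonneg v])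
  linarith [neg_abs_le ⟪u, v⟫]

lemma one_sub_norm_sq_eAdd (hu : ‖u‖ < 1) (hv : ‖v‖ < 1) :
    1 - ‖eAdd u v‖ ^ 2 = ((gam u * gam v * (1 + ⟪u, v⟫)) ^ 2)⁻¹ := by
  have hgu := (gam_pos hu).ne'
  have hgv := (gam_pos hv).ne'
  have h1gu : 1 + gam u ≠ 0 := by linarith [gam_pos hu]
  have h1a := (one_add_inner_pos hu hv).ne'
  rw [← real_inner_self_eq_norm_sq]
  simp only [eAdd, inner_add_left, inner_add_right, real_inner_smul_left,
    real_inner_smul_right, real_inner_comm u v]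
  rw [real_inner_self_eq_norm_sq u, real_inner_self_eq_norm_sq v,
    norm_sq_eq_one_sub_inv_gam_sq hu, norm_sq_eq_one_sub_inv_gam_sq hv]
  field_simp
  ring

lemma gam_eAdd (hu : ‖u‖ < 1) (hv : ‖v‖ < 1) :
    gam (eAdd u v) = gam u * gam v * (1 + ⟪u, v⟫) := by
  have hpos := mul_pos (mul_pos (gam_pos hu) (gam_pos hv)) (one_add_inner_pos hu hv)
  rw [gam, one_sub_norm_sq_eAdd hu hv, Real.sqrt_inv, Real.sqrt_sq hpos.le, one_div, inv_inv]

lemma gam_smul_eAdd (hu : ‖u‖ < 1) (hv : ‖v‖ < 1) :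
    gam (eAdd u v) • eAdd u v =
      gam v • v + (gam u * gam v * (1 + gam u / (1 + gam u) * ⟪u, v⟫)) • u := by
  have hgu := (gam_pos hu).ne'
  have h1a := (one_add_inner_pos hu hv).ne'
  rw [gam_eAdd hu hv, eAdd]
  match_scalars <;> field_simp

lemma boost_mulVec (u x : EuclideanSpace ℝ (Fin n)) (t : ℝ) :
    (boost u).mulVec (Sum.elim (fun _ => t) fun i => x i) =
      Sum.elim (fun _ => gam u * (t + ⟪u, x⟫))
        fun i => x i + gam u * (t + gam u / (1 + gam u) * ⟪u, x⟫) * u i := by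
  rw [← real_inner_comm]
  ext (_ | i) <;>
  simp only [boost, Matrix.mulVec, dotProduct, Fintype.sum_sum_type, PiLp.inner_apply,
    Matrix.fromBlocks_apply₁₁, Matrix.fromBlocks_apply₁₂, Matrix.fromBlocks_apply₂₁,
    Matrix.fromBlocks_apply₂₂, Matrix.add_apply, Matrix.one_apply, Matrix.of_apply,
    Sum.elim_inl, Sum.elim_inr, Finset.univ_unique, Finset.sum_singleton, add_mul,
    Finset.sum_add_distrib, ite_mul, one_mul, zero_mul, Finset.sum_ite_eq, Finset.mem_univ,
    if_true, mul_add, Finset.mul_sum, Finset.sum_mul, RCLike.inner_apply, conj_trivial] <;>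
  ring_nf

end

theorem boost_mulVec_fourVelocity {n : ℕ} (u v : EuclideanSpace ℝ (Fin n))
    (hu : ‖u‖ < 1) (hv : ‖v‖ < 1) :
    (boost u).mulVec (Sum.elim (fun _ => gam v) (fun i => gam v * v i)) =
      Sum.elim (fun _ => gam (eAdd u v)) (fun i => gam (eAdd u v) * (eAdd u v) i) := by
  have hvelocity : (fun i => gam v * v i) = fun i => (gam v • v) i := by simp
  rw [hvelocity, boost_mulVec]
  ext (_ | i)
  · simp only [Sum.elim_inl, real_inner_smul_right, gam_eAdd hu hv]
    ring
  · have hspace := congr($(gam_smul_eAdd hu hv) i)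
    simp only [Sum.elim_inr, PiLp.smul_apply, PiLp.add_apply, smul_eq_mul,
      real_inner_smul_right] at hspace ⊢
    rw [hspace]
    ring
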